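/- Let L > 0, κ > 0, let w : [0,L] → ℝ be continuous, and let μ, μ' be finite Borel measures on [0,L] with total masses η := μ([0,L]) and η' := μ'([0,L]) satisfying 0 < η ≤ 1 and 0 < η' ≤ 1. For a finite Borel measure ν with mass η(ν) ∈ (0,1] and a continuous p, write ℓ(ν,p) := 1/(1+κη(ν)) + (κη(ν)/(1+κη(ν)))·(1/η(ν))∫₀^L p dν. Let p* and p*' be the unique fixed points of Ψ_{w,μ} and Ψ_{w,μ'} respectively. Then sup_{x∈[0,L]} |p*(x) − p*'(x)| ≤ (1+κ)·|ℓ(μ,p*') − ℓ(μ',p*')|. -/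

import Mathlib

open MeasureTheory

/-- The market-price map `Ψ_{w,μ}(p)(x) = a + c·p̄ − (1/2)(a + c·p̄ − w(x))⁺`,
with `η = μ([0,L])`, `a = 1/(1+κη)`, `c = 1 − a` and `p̄ = (1/η)∫ p dμ`. -/
noncomputable def Psi (L κ : ℝ) (w : C(Set.Icc (0:ℝ) L, ℝ))
    (μ : Measure (Set.Icc (0:ℝ) L)) (p : C(Set.Icc (0:ℝ) L, ℝ))
    (x : Set.Icc (0:ℝ) L) : ℝ :=
  let η : ℝ := (μ Set.univ).toReal
  let a : ℝ := 1 / (1 + κ * η)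
  let c : ℝ := 1 - a
  let pbar : ℝ := (1 / η) * ∫ y, p y ∂μ
  a + c * pbar - (1 / 2) * max (a + c * pbar - w x) 0

/-- `ℓ(ν,p) = 1/(1+κη(ν)) + (κη(ν)/(1+κη(ν)))·(1/η(ν))·∫ p dν`. -/
noncomputable def ell (L κ : ℝ) (ν : Measure (Set.Icc (0:ℝ) L))
    (p : C(Set.Icc (0:ℝ) L, ℝ)) : ℝ :=
  let η : ℝ := (ν Set.univ).toReal
  1 / (1 + κ * η) + (κ * η / (1 + κ * η)) * ((1 / η) * ∫ y, p y ∂ν)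

/-!
Write `f_u(s) = s − ½(s − u)⁺`, so that `Ψ_{w,μ}(p)(x) = f_{w(x)}(ℓ(μ,p))`. Each `f_u` is
1-Lipschitz, and `p ↦ ℓ(μ,p)` is Lipschitz with constant `c = κη/(1+κη) < 1` for the sup norm.
Hence, with `D = |ℓ(μ,p*') − ℓ(μ',p*')|`, the sup norm `M = ‖p* − p*'‖` satisfies
`M ≤ |ℓ(μ,p*) − ℓ(μ,p*')| + D ≤ c M + D`, i.e. `M ≤ (1+κη) D ≤ (1+κ) D`.
-/

lemma abs_sub_half_max_sub_le (s t u : ℝ) :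
    |(s - (1/2) * max (s - u) 0) - (t - (1/2) * max (t - u) 0)| ≤ |s - t| := by
  have h1 := le_abs_self (s - t)
  have h2 := neg_abs_le (s - t)
  rcases max_cases (s - u) (0:ℝ) with ⟨e1, e2⟩ | ⟨e1, e2⟩ <;>
    rcases max_cases (t - u) (0:ℝ) with ⟨f1, f2⟩ | ⟨f1, f2⟩ <;>
    rw [e1, f1, abs_le] <;> constructor <;> linarith

lemma le_one_add_mul_of_le_div_mul_add {t M D : ℝ} (ht : 0 ≤ t)
    (h : M ≤ t / (1 + t) * M + D) : M ≤ (1 + t) * D := by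
  have hpos : 0 < 1 + t := by linarith
  have : (1 + t) * M ≤ t * M + (1 + t) * D := by
    calc (1 + t) * M ≤ (1 + t) * (t / (1 + t) * M + D) := by gcongr
      _ = t * M + (1 + t) * D := by field_simp
  linarith

section

variable {L κ : ℝ}

lemma Psi_eq_sub_half_max (hκ : 0 ≤ κ) (w : C(Set.Icc (0:ℝ) L, ℝ))
    (μ : Measure (Set.Icc (0:ℝ) L)) (p : C(Set.Icc (0:ℝ) L, ℝ)) (x : Set.Icc (0:ℝ) L) :
    Psi L κ w μ p x = ell L κ μ p - (1/2) * max (ell L κ μ p - w x) 0 := by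
  have hpos : 0 < 1 + κ * (μ Set.univ).toReal := by positivity
  have hc : 1 - 1 / (1 + κ * (μ Set.univ).toReal) =
      κ * (μ Set.univ).toReal / (1 + κ * (μ Set.univ).toReal) := by
    field_simp
    ring
  simp only [Psi, ell, hc]

lemma abs_ell_sub_ell_le_mul_norm (hκ : 0 ≤ κ) (μ : Measure (Set.Icc (0:ℝ) L))
    [IsFiniteMeasure μ] (p q : C(Set.Icc (0:ℝ) L, ℝ)) :
    |ell L κ μ p - ell L κ μ q| ≤
      κ * (μ Set.univ).toReal / (1 + κ * (μ Set.univ).toReal) * ‖p - q‖ := by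
  set η := (μ Set.univ).toReal
  have hint : ∀ r : C(Set.Icc (0:ℝ) L, ℝ), Integrable r μ := fun r =>
    r.continuous.integrable_of_hasCompactSupport (HasCompactSupport.of_compactSpace _)
  have hdiff : ell L κ μ p - ell L κ μ q =
      κ * η / (1 + κ * η) * ((1 / η) * ∫ y, (p - q) y ∂μ) := by
    simp only [ell, ContinuousMap.sub_apply, integral_sub (hint p) (hint q)]
    ring
  have hintegral : |∫ y, (p - q) y ∂μ| ≤ ‖p - q‖ * η :=
    norm_integral_le_of_norm_le_const (Filter.Eventually.of_forall (p - q).norm_coe_le_norm)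
  -- With `1 / 0 = 0` this holds for the zero measure too.
  have hmean : (1 / η) * |∫ y, (p - q) y ∂μ| ≤ ‖p - q‖ := by
    calc (1 / η) * |∫ y, (p - q) y ∂μ| ≤ (1 / η) * (‖p - q‖ * η) := by gcongr
      _ ≤ ‖p - q‖ := by
        rcases (show 0 ≤ η by positivity).eq_or_lt with h0 | h0
        · rw [← h0]; simp
        · rw [one_div_mul_eq_div, mul_div_assoc, div_self h0.ne', mul_one]
  rw [hdiff, abs_mul, abs_mul, abs_of_nonneg (by positivity : 0 ≤ κ * η / (1 + κ * η)),
    abs_of_nonneg (by positivity : 0 ≤ 1 / η)]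
  gcongr

end

theorem Psi_fixedPoint_stability_in_measure_general (L κ : ℝ) (hκ : 0 < κ)
    (w : C(Set.Icc (0:ℝ) L, ℝ))
    (μ μ' : Measure (Set.Icc (0:ℝ) L)) [IsFiniteMeasure μ]
    (hη1 : (μ Set.univ).toReal ≤ 1)
    (pstar pstar' : C(Set.Icc (0:ℝ) L, ℝ))
    (hfix : ∀ x : Set.Icc (0:ℝ) L, Psi L κ w μ pstar x = pstar x)
    (hfix' : ∀ x : Set.Icc (0:ℝ) L, Psi L κ w μ' pstar' x = pstar' x) :
    (⨆ x : Set.Icc (0:ℝ) L, |pstar x - pstar' x|) ≤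
      (1 + κ) * |ell L κ μ pstar' - ell L κ μ' pstar'| := by
  set η := (μ Set.univ).toReal
  set D := |ell L κ μ pstar' - ell L κ μ' pstar'|
  have hpointwise (x) : |pstar x - pstar' x| ≤ |ell L κ μ pstar - ell L κ μ' pstar'| := by
    rw [← hfix x, ← hfix' x, Psi_eq_sub_half_max hκ.le, Psi_eq_sub_half_max hκ.le]
    exact abs_sub_half_max_sub_le _ _ _
  have hcontract : ‖pstar - pstar'‖ ≤ κ * η / (1 + κ * η) * ‖pstar - pstar'‖ + D := by
    refine (ContinuousMap.norm_le _ (by positivity)).2 fun x => (hpointwise x).trans ?_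
    calc |ell L κ μ pstar - ell L κ μ' pstar'|
        ≤ |ell L κ μ pstar - ell L κ μ pstar'| + D := abs_sub_le _ _ _
      _ ≤ _ := by gcongr; exact abs_ell_sub_ell_le_mul_norm hκ.le μ pstar pstar'
  have hnorm : ‖pstar - pstar'‖ ≤ (1 + κ) * D :=
    calc ‖pstar - pstar'‖ ≤ (1 + κ * η) * D :=
          le_one_add_mul_of_le_div_mul_add (by positivity) hcontract
      _ ≤ (1 + κ) * D := by gcongr; nlinarith
  exact Real.iSup_le (fun x => ((pstar - pstar').norm_coe_le_norm x).trans hnorm)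
    (by positivity)

/-- Stability of the market price in the measure:
`‖p* − p*'‖_∞ ≤ (1+κ)·|ℓ(μ,p*') − ℓ(μ',p*')|`. -/
theorem Psi_fixedPoint_stability_in_measure (L κ : ℝ) (hL : 0 < L) (hκ : 0 < κ)
    (w : C(Set.Icc (0:ℝ) L, ℝ))
    (μ μ' : Measure (Set.Icc (0:ℝ) L)) [IsFiniteMeasure μ] [IsFiniteMeasure μ']
    (hη : 0 < (μ Set.univ).toReal) (hη1 : (μ Set.univ).toReal ≤ 1)
    (hη' : 0 < (μ' Set.univ).toReal) (hη1' : (μ' Set.univ).toReal ≤ 1)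
    (pstar pstar' : C(Set.Icc (0:ℝ) L, ℝ))
    (hfix : ∀ x : Set.Icc (0:ℝ) L, Psi L κ w μ pstar x = pstar x)
    (hfix' : ∀ x : Set.Icc (0:ℝ) L, Psi L κ w μ' pstar' x = pstar' x) :
    (⨆ x : Set.Icc (0:ℝ) L, |pstar x - pstar' x|) ≤
      (1 + κ) * |ell L κ μ pstar' - ell L κ μ' pstar'| :=
  Psi_fixedPoint_stability_in_measure_general L κ hκ w μ μ' hη1 pstar pstar' hfix hfix'
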